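/- Let ρ and σ be quantum states on ℂ^d and let ℳ be a set of POVMs on ℂ^d containing at least one POVM different from the trivial one-outcome POVM (the identity), and such that the cone C_ℳ is closed, convex, pointed, and has nonempty interior in the real vector space of Hermitian d×d matrices. Then D_∞^ℳ(ρ‖σ) ≤ sup { log( tr[ρω] / tr[σω] ) : ω positive definite, ω ∈ C_ℳ }, and this supremum equals inf { log λ : λ > 0, λσ − ρ ∈ C_ℳ† }, where C_ℳ† := { γ Hermitian : tr[γω] ≥ 0 for all ω ∈ C_ℳ } is the dual cone. -/

import Mathlib

open scoped Kronecker ComplexOrder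
open Matrix Filter

noncomputable section
open scoped Classical

namespace MRD

/-- A POVM on the Hilbert space `ℂ^n` (for a finite index type `n`), over a finite
outcome alphabet `ι`. -/
structure POVM (n : Type) [Fintype n] [DecidableEq n] where
  ι : Type
  [fin : Fintype ι]
  elem : ι → Matrix n n ℂ
  pos : ∀ z, (elem z).PosSemidef
  sum_one : ∑ z, elem z = 1

attribute [instance] POVM.fin

variable {n : Type} [Fintype n] [DecidableEq n]

/-- The probability distribution induced by a state and a POVM (Born rule). -/
def POVM.dist (M : POVM n) (ρ : Matrix n n ℂ) : M.ι → ℝ :=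
  fun z => ((ρ * M.elem z).trace).re

/-- `tr2 A B = Re tr[A B]`. -/
def tr2 (A B : Matrix n n ℂ) : ℝ := ((A * B).trace).re

/-- The cone `C_ℳ` generated by a set of POVMs: the union of the conical hulls of the POVMs. -/
def cone (𝓜 : Set (POVM n)) : Set (Matrix n n ℂ) :=
  { ω | ∃ M ∈ 𝓜, ∃ lam : M.ι → ℝ, (∀ z, 0 ≤ lam z) ∧ ω = ∑ z, (lam z : ℂ) • M.elem z }

/-- Functional calculus for Hermitian matrices (junk value `0` on non-Hermitian input). -/
def hermCFC (f : ℝ → ℝ) (ω : Matrix n n ℂ) : Matrix n n ℂ :=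
  if h : ω.IsHermitian then
    (h.eigenvectorUnitary : Matrix n n ℂ) * Matrix.diagonal (fun i => (f (h.eigenvalues i) : ℂ)) *
      star (h.eigenvectorUnitary : Matrix n n ℂ)
  else 0

/-- Real powers of a (Hermitian, positive definite) matrix, via functional calculus. -/
def mpow (ω : Matrix n n ℂ) (p : ℝ) : Matrix n n ℂ := hermCFC (fun x => x ^ p) ω

/-- Logarithm of a (Hermitian, positive definite) matrix, via functional calculus. -/
def mlog (ω : Matrix n n ℂ) : Matrix n n ℂ := hermCFC Real.log ω

/-- The classical quantity `Q_α(μ‖ν) = ∑_z μ(z)^α ν(z)^(1-α)`. -/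
def Qclass {Z : Type} [Fintype Z] (α : ℝ) (μ ν : Z → ℝ) : ℝ :=
  ∑ z, μ z ^ α * ν z ^ (1 - α)

/-- `Q_α` for `α > 1`, valued in `[0,∞]`: it is `+∞` unless `μ ≪ ν`. -/
def QclassE {Z : Type} [Fintype Z] (α : ℝ) (μ ν : Z → ℝ) : EReal :=
  if ∀ z, ν z = 0 → μ z = 0 then ((Qclass α μ ν : ℝ) : EReal) else ⊤

/-- The classical max-divergence `D_∞(μ‖ν) = max_{z : μ(z) ≠ 0} log (μ(z)/ν(z))`,
with the convention `log (c/0) = +∞`. -/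
def Dmax {Z : Type} [Fintype Z] (μ ν : Z → ℝ) : EReal :=
  ⨆ z : {z : Z // μ z ≠ 0},
    (if ν z.1 = 0 then (⊤ : EReal) else ((Real.log (μ z.1 / ν z.1) : ℝ) : EReal))

/-- The classical Rényi divergence of order `α ∈ (0,∞]` (`α : EReal`), with the standard
conventions for `+∞` in the non-absolutely-continuous / orthogonal cases. -/
def rdiv {Z : Type} [Fintype Z] (α : EReal) (μ ν : Z → ℝ) : EReal :=
  if α = ⊤ then Dmax μ ν
  else if α = 1 then
    (if ∀ z, ν z = 0 → μ z = 0 then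
      (((∑ z, μ z * Real.log (μ z / ν z)) : ℝ) : EReal) else ⊤)
  else if 1 < α then
    (if ∀ z, ν z = 0 → μ z = 0 then
      (((α.toReal - 1)⁻¹ * Real.log (Qclass α.toReal μ ν) : ℝ) : EReal) else ⊤)
  else
    (if ∃ z, μ z ≠ 0 ∧ ν z ≠ 0 then
      (((α.toReal - 1)⁻¹ * Real.log (Qclass α.toReal μ ν) : ℝ) : EReal) else ⊤)

/-- The measured Rényi divergence `D_α^ℳ(ρ‖σ) = sup_{M ∈ ℳ} D_α(μ_ρ^M‖μ_σ^M)`. -/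
def mrdiv (𝓜 : Set (POVM n)) (α : EReal) (ρ σ : Matrix n n ℂ) : EReal :=
  ⨆ M ∈ 𝓜, rdiv α (M.dist ρ) (M.dist σ)

/-- The variational objective function `ν_α((ρ,σ); ω)`, for `α ∈ (0,∞]`. -/
def nuObj (α : EReal) (ρ σ ω : Matrix n n ℂ) : ℝ :=
  if α = ⊤ then Real.log (tr2 ρ ω) + 1 - tr2 σ ω
  else if α = 1 then tr2 ρ (mlog ω) + 1 - tr2 σ ω
  else if α.toReal < 1 / 2 then
    (α.toReal - 1)⁻¹ *
      Real.log (α.toReal * tr2 ρ ω + (1 - α.toReal) * tr2 σ (mpow ω (α.toReal / (α.toReal - 1))))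
  else
    (α.toReal - 1)⁻¹ *
      Real.log (α.toReal * tr2 ρ (mpow ω ((α.toReal - 1) / α.toReal)) + (1 - α.toReal) * tr2 σ ω)

section Bipartite

variable (a b : Type) [Fintype a] [DecidableEq a] [Fintype b] [DecidableEq b]

/-- A family of mutually orthogonal orthogonal projections summing to the identity. -/
def IsOrthProjFamily {ι : Type} [Fintype ι] {m : Type} [Fintype m] [DecidableEq m]
    (P : ι → Matrix m m ℂ) : Prop :=
  (∀ x, (P x).IsHermitian) ∧ (∀ x, P x * P x = P x) ∧
    (∀ x y, x ≠ y → P x * P y = 0) ∧ ∑ x, P x = 1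

/-- The class `P-LO(A:B)` of local projective measurements. -/
def PLO : Set (POVM (a × b)) :=
  { M | ∃ (X Y : Type) (_ : Fintype X) (_ : Fintype Y)
      (PA : X → Matrix a a ℂ) (PB : Y → Matrix b b ℂ) (e : M.ι ≃ X × Y),
      IsOrthProjFamily PA ∧ IsOrthProjFamily PB ∧
      ∀ z, M.elem z = PA (e z).1 ⊗ₖ PB (e z).2 }

/-- The class `LO(A:B)` of local measurements. -/
def LO : Set (POVM (a × b)) :=
  { M | ∃ (MA : POVM a) (MB : POVM b) (e : M.ι ≃ MA.ι × MB.ι),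
      ∀ z, M.elem z = MA.elem (e z).1 ⊗ₖ MB.elem (e z).2 }

/-- The partial transpose (transposition of the `B` tensor factor). -/
def ptrans {a b : Type} (X : Matrix (a × b) (a × b) ℂ) : Matrix (a × b) (a × b) ℂ :=
  Matrix.of fun x y => X (x.1, y.2) (y.1, x.2)

/-- Separable (positive semidefinite) operators: finite sums of tensor products of positive
semidefinite operators. -/
def SepMat {a b : Type} [Fintype a] [DecidableEq a] [Fintype b] [DecidableEq b]
    (ω : Matrix (a × b) (a × b) ℂ) : Prop :=
  ∃ (k : ℕ) (X : Fin k → Matrix a a ℂ) (Y : Fin k → Matrix b b ℂ),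
    (∀ z, (X z).PosSemidef) ∧ (∀ z, (Y z).PosSemidef) ∧ ω = ∑ z, X z ⊗ₖ Y z

/-- The class `SEP(A:B)`: POVMs all of whose elements are separable. -/
def SEP : Set (POVM (a × b)) := { M | ∀ z, SepMat (M.elem z) }

/-- The class `PPT(A:B)`: POVMs all of whose elements have positive semidefinite
partial transpose. -/
def PPT : Set (POVM (a × b)) := { M | ∀ z, (ptrans (M.elem z)).PosSemidef }

end Bipartite

/-- The maximally entangled state `Φ` on `ℂ^d ⊗ ℂ^d`. -/
def maxEnt (d : ℕ) : Matrix (Fin d × Fin d) (Fin d × Fin d) ℂ :=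
  Matrix.of fun x y => if x.1 = x.2 ∧ y.1 = y.2 then ((d : ℂ))⁻¹ else 0

/-- The orthogonal complement `Φ⊥ = (1 - Φ)/(d² - 1)`. -/
def maxEntPerp (d : ℕ) : Matrix (Fin d × Fin d) (Fin d × Fin d) ℂ :=
  ((d : ℂ) ^ 2 - 1)⁻¹ • (1 - maxEnt d)

/-- The isotropic state `i(q) = q Φ + (1 - q) Φ⊥`. -/
def iso (d : ℕ) (q : ℝ) : Matrix (Fin d × Fin d) (Fin d × Fin d) ℂ :=
  (q : ℂ) • maxEnt d + ((1 - q : ℝ) : ℂ) • maxEntPerp d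

/-- The `n`-fold tensor (Kronecker) power of a matrix on `ℂ^d`. -/
def tpow {d : ℕ} (ρ : Matrix (Fin d) (Fin d) ℂ) (n : ℕ) :
    Matrix (Fin n → Fin d) (Fin n → Fin d) ℂ :=
  Matrix.of fun x y => ∏ i, ρ (x i) (y i)

/-- The `n`-fold tensor power of a bipartite matrix on `ℂ^d ⊗ ℂ^d`, written on
`((ℂ^d)^{⊗n})_A ⊗ ((ℂ^d)^{⊗n})_B`, i.e. with all `A`-factors grouped into one block and all
`B`-factors into the other. -/
def tpowBip {d : ℕ} (ρ : Matrix (Fin d × Fin d) (Fin d × Fin d) ℂ) (n : ℕ) :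
    Matrix ((Fin n → Fin d) × (Fin n → Fin d)) ((Fin n → Fin d) × (Fin n → Fin d)) ℂ :=
  Matrix.of fun x y => ∏ i, ρ (x.1 i, x.2 i) (y.1 i, y.2 i)

/-- The tensor product of a matrix on `(ℂ^d)^{⊗k}` and a matrix on `(ℂ^d)^{⊗l}`, as a matrix
on `(ℂ^d)^{⊗(k+l)}`. -/
def prodElem {d k l : ℕ} (A : Matrix (Fin k → Fin d) (Fin k → Fin d) ℂ)
    (B : Matrix (Fin l → Fin d) (Fin l → Fin d) ℂ) :
    Matrix (Fin (k + l) → Fin d) (Fin (k + l) → Fin d) ℂ :=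
  Matrix.of fun x y =>
    A (fun i => x (Fin.castAdd l i)) (fun i => y (Fin.castAdd l i)) *
      B (fun j => x (Fin.natAdd k j)) (fun j => y (Fin.natAdd k j))

/-- A family `(ℳ_n)_n` of measurement sets is closed under tensor products if for all
`M_k ∈ ℳ_k` and `M_l ∈ ℳ_l` the product POVM `M_k ⊗ M_l` belongs to `ℳ_{k+l}`. -/
def TensorClosed {d : ℕ} (𝓜 : ∀ m : ℕ, Set (POVM (Fin m → Fin d))) : Prop :=
  ∀ k l : ℕ, ∀ Mk ∈ 𝓜 k, ∀ Ml ∈ 𝓜 l,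
    ∃ M ∈ 𝓜 (k + l), ∃ e : Mk.ι × Ml.ι ≃ M.ι,
      ∀ z, M.elem (e z) = prodElem (Mk.elem z.1) (Ml.elem z.2)

/-- `T` is a test available in the measurement set `𝓝`: `0 ≤ T ≤ 1` and the binary POVM
`{T, 1 - T}` belongs to `𝓝`. -/
def IsTest {m : Type} [Fintype m] [DecidableEq m] (𝓝 : Set (POVM m)) (T : Matrix m m ℂ) : Prop :=
  T.PosSemidef ∧ (1 - T).PosSemidef ∧
    ∃ M ∈ 𝓝, ∃ e : M.ι ≃ Bool, M.elem (e.symm true) = T ∧ M.elem (e.symm false) = 1 - T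

/-- Extended-real logarithm of a real number: `-∞` on `(-∞,0]`. -/
def elogr (x : ℝ) : EReal := if x ≤ 0 then ⊥ else ((Real.log x : ℝ) : EReal)

/-- Extended-real logarithm on `EReal`. -/
def elog (x : EReal) : EReal :=
  if x ≤ 0 then ⊥ else if x = ⊤ then ⊤ else ((Real.log x.toReal : ℝ) : EReal)


/-- Extra: the action of `id_m ⊗ 𝒢` on block matrices (for complete positivity). -/
def blockApply {d : ℕ} (𝒢 : Matrix (Fin d) (Fin d) ℂ →ₗ[ℂ] Matrix (Fin d) (Fin d) ℂ) (m : ℕ)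
    (X : Matrix (Fin m × Fin d) (Fin m × Fin d) ℂ) : Matrix (Fin m × Fin d) (Fin m × Fin d) ℂ :=
  Matrix.of fun p q => 𝒢 (Matrix.of fun s t => X (p.1, s) (q.1, t)) p.2 q.2


set_option linter.unusedSectionVars false

section Aux

variable {m : Type} [Fintype m] [DecidableEq m]

lemma trace_re_eq_sum_eigen {A : Matrix m m ℂ} (hA : A.IsHermitian) :
    A.trace.re = ∑ i, hA.eigenvalues i := by
  have hU : (star (hA.eigenvectorUnitary : Matrix m m ℂ)) *
      (hA.eigenvectorUnitary : Matrix m m ℂ) = 1 :=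
    (Unitary.mem_iff.mp hA.eigenvectorUnitary.2).1
  have h : A.trace = ∑ i, (hA.eigenvalues i : ℂ) := by
    conv_lhs => rw [hA.spectral_theorem, Unitary.conjStarAlgAut_apply]
    rw [Matrix.trace_mul_cycle, hU, one_mul, Matrix.trace_diagonal]
    rfl
  rw [h, Complex.re_sum]
  simp

lemma psd_trace_re_nonneg {A : Matrix m m ℂ} (hA : A.PosSemidef) : 0 ≤ A.trace.re := by
  rw [trace_re_eq_sum_eigen hA.1]
  exact Finset.sum_nonneg fun i _ => hA.eigenvalues_nonneg i

lemma psd_eq_zero_of_trace_re {A : Matrix m m ℂ} (hA : A.PosSemidef)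
    (h : A.trace.re = 0) : A = 0 := by
  rw [trace_re_eq_sum_eigen hA.1] at h
  have hz : ∀ i ∈ Finset.univ, hA.1.eigenvalues i = 0 :=
    (Finset.sum_eq_zero_iff_of_nonneg (fun i _ => hA.eigenvalues_nonneg i)).mp h
  have := hA.1.spectral_theorem
  rwa [show Matrix.diagonal (RCLike.ofReal ∘ hA.1.eigenvalues) = (0 : Matrix m m ℂ) by
      ext i j
      by_cases hij : i = j <;>
        simp [Matrix.diagonal, hij, hz _ (Finset.mem_univ _)],
    map_zero] at this

open scoped MatrixOrder in
def _root_.Matrix.PosSemidef.sqrt {A : Matrix m m ℂ} (_hA : A.PosSemidef) : Matrix m m ℂ :=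
  CFC.sqrt A

open scoped MatrixOrder in
lemma _root_.Matrix.PosSemidef.posSemidef_sqrt {A : Matrix m m ℂ} (hA : A.PosSemidef) :
    hA.sqrt.PosSemidef :=
  (CFC.sqrt_nonneg A).posSemidef

open scoped MatrixOrder in
lemma _root_.Matrix.PosSemidef.sqrt_mul_self {A : Matrix m m ℂ} (hA : A.PosSemidef) :
    hA.sqrt * hA.sqrt = A :=
  CFC.sqrt_mul_sqrt_self A hA.nonneg

lemma tr2_eq_trace_sandwich {A B : Matrix m m ℂ} (hA : A.PosSemidef) :
    tr2 A B = (hA.sqrt * B * hA.sqrt).trace.re := by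
  have h1 : A * B = hA.sqrt * (hA.sqrt * B) := by rw [← mul_assoc, hA.sqrt_mul_self]
  rw [tr2, h1, Matrix.trace_mul_comm, mul_assoc]

lemma sandwich_posSemidef {A B : Matrix m m ℂ} (hA : A.PosSemidef) (hB : B.PosSemidef) :
    (hA.sqrt * B * hA.sqrt).PosSemidef := by
  have := hB.conjTranspose_mul_mul_same hA.sqrt
  rwa [hA.posSemidef_sqrt.1] at this

lemma tr2_nonneg {A B : Matrix m m ℂ} (hA : A.PosSemidef) (hB : B.PosSemidef) :
    0 ≤ tr2 A B := by
  rw [tr2_eq_trace_sandwich hA]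
  exact psd_trace_re_nonneg (sandwich_posSemidef hA hB)

lemma tr2_pos {A B : Matrix m m ℂ} (hA : A.PosSemidef) (hA0 : A.trace.re ≠ 0)
    (hB : B.PosDef) : 0 < tr2 A B := by
  rcases lt_or_eq_of_le (tr2_nonneg hA hB.posSemidef) with h | h
  · exact h
  exfalso
  have hC0 : hA.sqrt * B * hA.sqrt = 0 := by
    apply psd_eq_zero_of_trace_re (sandwich_posSemidef hA hB.posSemidef)
    rw [← tr2_eq_trace_sandwich hA, ← h]
  have hsq : ∀ x : m → ℂ, hA.sqrt *ᵥ x = 0 := by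
    intro x
    by_contra hx
    have h0 : star (hA.sqrt *ᵥ x) ⬝ᵥ (B *ᵥ (hA.sqrt *ᵥ x)) = 0 := by
      have e1 : star (hA.sqrt *ᵥ x) = star x ᵥ* hA.sqrt := by
        rw [Matrix.star_mulVec, hA.posSemidef_sqrt.1]
      rw [e1, ← dotProduct_mulVec, Matrix.mulVec_mulVec, Matrix.mulVec_mulVec, hC0]
      simp
    exact absurd h0 (ne_of_gt (hB.dotProduct_mulVec_pos hx))
  have hA0' : A = 0 := by
    ext i j
    have := congrFun (show A *ᵥ Pi.single j 1 = 0 by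
      rw [show A = hA.sqrt * hA.sqrt from hA.sqrt_mul_self.symm, ← Matrix.mulVec_mulVec,
        hsq]) i
    simpa [Matrix.mulVec_single] using this
  rw [hA0'] at hA0
  simp at hA0

lemma tr2_add_right (A B C : Matrix m m ℂ) : tr2 A (B + C) = tr2 A B + tr2 A C := by
  simp [tr2, Matrix.mul_add]

lemma tr2_ofReal_smul_right (A B : Matrix m m ℂ) (r : ℝ) :
    tr2 A ((r : ℂ) • B) = r * tr2 A B := by
  simp [tr2, Matrix.mul_smul, Complex.re_ofReal_mul]

lemma tr2_one (A : Matrix m m ℂ) : tr2 A 1 = A.trace.re := by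
  simp [tr2]

lemma tr2_sub_smul_left (A B C : Matrix m m ℂ) (r : ℝ) :
    tr2 ((r : ℂ) • A - B) C = r * tr2 A C - tr2 B C := by
  simp [tr2, Matrix.sub_mul, Matrix.smul_mul, Complex.re_ofReal_mul]

lemma real_smul_matrix_eq (r : ℝ) (B : Matrix m m ℂ) : r • B = (r : ℂ) • B := by
  ext i j
  simp [Complex.real_smul]

lemma psd_ofReal_smul {B : Matrix m m ℂ} (hB : B.PosSemidef) {r : ℝ} (hr : 0 ≤ r) :
    ((r : ℂ) • B).PosSemidef := by
  refine PosSemidef.of_dotProduct_mulVec_nonneg ?_ ?_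
  · show ((r : ℂ) • B)ᴴ = (r : ℂ) • B
    rw [Matrix.conjTranspose_smul, hB.1]
    congr 1
    simp
  · intro x
    rw [Matrix.smul_mulVec, dotProduct_smul, smul_eq_mul]
    exact mul_nonneg (Complex.zero_le_real.mpr hr) (hB.dotProduct_mulVec_nonneg x)

lemma posDef_ofReal_smul {B : Matrix m m ℂ} (hB : B.PosDef) {r : ℝ} (hr : 0 < r) :
    ((r : ℂ) • B).PosDef := by
  refine PosDef.of_dotProduct_mulVec_pos ?_ ?_
  · show ((r : ℂ) • B)ᴴ = (r : ℂ) • B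
    rw [Matrix.conjTranspose_smul, hB.1]
    congr 1
    simp
  · intro x hx
    rw [Matrix.smul_mulVec, dotProduct_smul, smul_eq_mul]
    exact mul_pos (Complex.zero_lt_real.mpr hr) (hB.dotProduct_mulVec_pos hx)

lemma cone_posSemidef {𝓜 : Set (POVM m)} {ω : Matrix m m ℂ} (h : ω ∈ cone 𝓜) :
    ω.PosSemidef := by
  obtain ⟨M, _, lam, hlam, rfl⟩ := h
  refine Finset.sum_induction _ _ (fun a b ha hb => ha.add hb) Matrix.PosSemidef.zero ?_
  intro z _
  exact psd_ofReal_smul (M.pos z) (hlam z)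

lemma one_mem_cone {𝓜 : Set (POVM m)} {M : POVM m} (hM : M ∈ 𝓜) :
    (1 : Matrix m m ℂ) ∈ cone 𝓜 := by
  refine ⟨M, hM, fun _ => 1, fun _ => zero_le_one, ?_⟩
  simp [M.sum_one]

lemma elem_add_smul_one_mem {𝓜 : Set (POVM m)} {M : POVM m} (hM : M ∈ 𝓜) (z : M.ι)
    {ε : ℝ} (hε : 0 ≤ ε) : M.elem z + (ε : ℂ) • 1 ∈ cone 𝓜 := by
  refine ⟨M, hM, fun w => (if w = z then 1 else 0) + ε, fun w => by positivity, ?_⟩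
  have : ∀ w : M.ι, (((if w = z then (1:ℝ) else 0) + ε : ℝ) : ℂ) • M.elem w
      = (if w = z then M.elem w else 0) + (ε : ℂ) • M.elem w := by
    intro w
    by_cases hw : w = z <;> simp [hw, add_smul]
  rw [Finset.sum_congr rfl fun w _ => this w, Finset.sum_add_distrib,
    Finset.sum_ite_eq' Finset.univ z, ← Finset.smul_sum, M.sum_one]
  simp

end Aux

theorem stmt9 (d : ℕ) (ρ σ : Matrix (Fin d) (Fin d) ℂ)
    (hρ : ρ.PosSemidef) (hρ1 : ρ.trace = 1) (hσ : σ.PosSemidef) (hσ1 : σ.trace = 1)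
    (𝓜 : Set (POVM (Fin d)))
    (hnontriv : ∃ M ∈ 𝓜, Fintype.card M.ι ≠ 1)
    (hclosed : IsClosed {γ : {γ : Matrix (Fin d) (Fin d) ℂ // γ.IsHermitian} |
        (γ : Matrix (Fin d) (Fin d) ℂ) ∈ cone 𝓜})
    (hconv : Convex ℝ (cone 𝓜))
    (hpointed : ∀ ω ∈ cone 𝓜, -ω ∈ cone 𝓜 → ω = 0)
    (hint : (interior {γ : {γ : Matrix (Fin d) (Fin d) ℂ // γ.IsHermitian} |
        (γ : Matrix (Fin d) (Fin d) ℂ) ∈ cone 𝓜}).Nonempty) :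
    mrdiv 𝓜 ⊤ ρ σ
      ≤ (⨆ ω ∈ {ω : Matrix (Fin d) (Fin d) ℂ | ω.PosDef ∧ ω ∈ cone 𝓜},
          ((Real.log (tr2 ρ ω / tr2 σ ω) : ℝ) : EReal)) ∧
    (⨆ ω ∈ {ω : Matrix (Fin d) (Fin d) ℂ | ω.PosDef ∧ ω ∈ cone 𝓜},
          ((Real.log (tr2 ρ ω / tr2 σ ω) : ℝ) : EReal))
      = ⨅ l ∈ {l : ℝ | 0 < l ∧ ((l : ℂ) • σ - ρ).IsHermitian ∧
            ∀ ω ∈ cone 𝓜, 0 ≤ tr2 ((l : ℂ) • σ - ρ) ω},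
          ((Real.log l : ℝ) : EReal) := by
  classical
  obtain ⟨M₀, hM₀, -⟩ := hnontriv
  set S := (⨆ ω ∈ {ω : Matrix (Fin d) (Fin d) ℂ | ω.PosDef ∧ ω ∈ cone 𝓜},
      ((Real.log (tr2 ρ ω / tr2 σ ω) : ℝ) : EReal)) with hSdef
  have hρre : ρ.trace.re = 1 := by rw [hρ1]; simp
  have hσre : σ.trace.re = 1 := by rw [hσ1]; simp
  have hρ0 : ρ.trace.re ≠ 0 := by rw [hρre]; norm_num
  have hσ0 : σ.trace.re ≠ 0 := by rw [hσre]; norm_num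
  have h1cone : (1 : Matrix (Fin d) (Fin d) ℂ) ∈ cone 𝓜 := one_mem_cone hM₀
  have hmem : ∀ ω : Matrix (Fin d) (Fin d) ℂ, ω.PosDef → ω ∈ cone 𝓜 →
      ((Real.log (tr2 ρ ω / tr2 σ ω) : ℝ) : EReal) ≤ S := by
    intro ω h1 h2
    exact le_iSup₂ (f := fun ω (_ : ω ∈ {ω : Matrix (Fin d) (Fin d) ℂ | ω.PosDef ∧ ω ∈ cone 𝓜}) =>
      ((Real.log (tr2 ρ ω / tr2 σ ω) : ℝ) : EReal)) ω ⟨h1, h2⟩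
  have hS0 : (0 : EReal) ≤ S := by
    have h := hmem 1 Matrix.PosDef.one h1cone
    rw [tr2_one, tr2_one, hρre, hσre] at h
    simpa using h
  have hSbot : S ≠ ⊥ := by
    intro h
    rw [h] at hS0
    simp at hS0
  constructor
  · rw [mrdiv]
    refine iSup₂_le fun M hM => ?_
    rw [show rdiv ⊤ (M.dist ρ) (M.dist σ) = Dmax (M.dist ρ) (M.dist σ) from if_pos rfl, Dmax]
    refine iSup_le ?_
    rintro ⟨z, hz⟩
    have hd : M.dist ρ z = tr2 ρ (M.elem z) := rfl
    have hdσ : M.dist σ z = tr2 σ (M.elem z) := rfl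
    have hzρ : 0 < M.dist ρ z := lt_of_le_of_ne (hd ▸ tr2_nonneg hρ (M.pos z)) (Ne.symm hz)
    have key : ∀ ε : ℝ, 0 < ε →
        ((Real.log ((M.dist ρ z + ε) / (M.dist σ z + ε)) : ℝ) : EReal) ≤ S := by
      intro ε hε
      have hω : M.elem z + (ε : ℂ) • 1 ∈ cone 𝓜 := elem_add_smul_one_mem hM z hε.le
      have hpd : (M.elem z + (ε : ℂ) • 1).PosDef :=
        Matrix.PosDef.posSemidef_add (M.pos z) (posDef_ofReal_smul Matrix.PosDef.one hε)
      have e1 : tr2 ρ (M.elem z + (ε : ℂ) • 1) = M.dist ρ z + ε := by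
        rw [tr2_add_right, tr2_ofReal_smul_right, tr2_one, hρre, mul_one, hd]
      have e2 : tr2 σ (M.elem z + (ε : ℂ) • 1) = M.dist σ z + ε := by
        rw [tr2_add_right, tr2_ofReal_smul_right, tr2_one, hσre, mul_one, hdσ]
      have h := hmem _ hpd hω
      rwa [e1, e2] at h
    by_cases hν : M.dist σ z = 0
    · rw [if_pos hν]
      have htop : S = ⊤ := by
        rw [EReal.eq_top_iff_forall_lt]
        intro c
        set ε := min 1 (M.dist ρ z * Real.exp (-(c + 1))) with hεdef
        have hε : 0 < ε := lt_min one_pos (mul_pos hzρ (Real.exp_pos _))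
        have h2 : Real.exp (c + 1) ≤ (M.dist ρ z + ε) / (M.dist σ z + ε) := by
          rw [hν, zero_add]
          have hεle : ε ≤ M.dist ρ z * Real.exp (-(c + 1)) := min_le_right _ _
          rw [le_div_iff₀ hε]
          calc Real.exp (c + 1) * ε
              ≤ Real.exp (c + 1) * (M.dist ρ z * Real.exp (-(c + 1))) :=
                mul_le_mul_of_nonneg_left hεle (Real.exp_pos _).le
            _ = M.dist ρ z := by
                rw [mul_comm, mul_assoc, ← Real.exp_add,
                  show -(c + 1) + (c + 1) = 0 by ring, Real.exp_zero, mul_one]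
            _ ≤ M.dist ρ z + ε := by linarith
        have h3 : c + 1 ≤ Real.log ((M.dist ρ z + ε) / (M.dist σ z + ε)) := by
          have := Real.log_le_log (Real.exp_pos (c + 1)) h2
          rwa [Real.log_exp] at this
        calc (c : EReal) < ((c + 1 : ℝ) : EReal) := by
              exact_mod_cast (by norm_num : (c : ℝ) < c + 1)
          _ ≤ ((Real.log ((M.dist ρ z + ε) / (M.dist σ z + ε)) : ℝ) : EReal) := by
              exact_mod_cast h3
          _ ≤ S := key ε hε
      rw [htop]
    · rw [if_neg hν]
      have hzσ : 0 < M.dist σ z := lt_of_le_of_ne (hdσ ▸ tr2_nonneg hσ (M.pos z)) (Ne.symm hν)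
      by_cases hT : S = ⊤
      · rw [hT]; exact le_top
      rw [← EReal.coe_toReal hT hSbot, EReal.coe_le_coe_iff]
      have keyR : ∀ ε : ℝ, 0 < ε →
          Real.log ((M.dist ρ z + ε) / (M.dist σ z + ε)) ≤ S.toReal := by
        intro ε hε
        have h := key ε hε
        rw [← EReal.coe_toReal hT hSbot, EReal.coe_le_coe_iff] at h
        exact h
      have hcont : Filter.Tendsto (fun ε : ℝ =>
          Real.log ((M.dist ρ z + ε) / (M.dist σ z + ε))) (nhdsWithin 0 (Set.Ioi 0))
          (nhds (Real.log (M.dist ρ z / M.dist σ z))) := by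
        have hca : ContinuousAt (fun ε : ℝ => (M.dist ρ z + ε) / (M.dist σ z + ε)) 0 :=
          ContinuousAt.div (by fun_prop) (by fun_prop) (by simpa using hzσ.ne')
        have hl0 : ContinuousAt (fun ε : ℝ =>
            Real.log ((M.dist ρ z + ε) / (M.dist σ z + ε))) 0 :=
          hca.log (by simp only [add_zero]; exact (div_pos hzρ hzσ).ne')
        have h0 := hl0.tendsto
        simp only [add_zero] at h0
        exact h0.mono_left nhdsWithin_le_nhds
      exact le_of_tendsto hcont (Filter.eventually_of_mem self_mem_nhdsWithin
        fun ε hε => keyR ε hε)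
  · refine le_antisymm ?_ ?_
    · refine le_iInf₂ fun l hl => ?_
      obtain ⟨hl0, -, hdual⟩ := hl
      refine iSup₂_le fun ω hω => ?_
      obtain ⟨hpd, hc⟩ := hω
      have h1 := hdual ω hc
      rw [tr2_sub_smul_left] at h1
      have hρω := tr2_pos hρ hρ0 hpd
      have hσω := tr2_pos hσ hσ0 hpd
      rw [EReal.coe_le_coe_iff]
      have hle : tr2 ρ ω / tr2 σ ω ≤ l := by
        rw [div_le_iff₀ hσω]; linarith
      exact Real.log_le_log (div_pos hρω hσω) hle
    · by_cases hT : S = ⊤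
      · rw [hT]; exact le_top
      conv_rhs => rw [← EReal.coe_toReal hT hSbot]
      refine le_of_forall_gt_imp_ge_of_dense fun a ha => ?_
      induction a using EReal.rec with
      | bot => exact absurd ha (by simp)
      | top => exact le_top
      | coe c =>
        have hsc : S < (c : EReal) := by
          rw [← EReal.coe_toReal hT hSbot]; exact ha
        set lam := Real.exp c with hlam
        have hherm : ((lam : ℂ) • σ - ρ).IsHermitian := by
          show ((lam : ℂ) • σ - ρ)ᴴ = _
          rw [Matrix.conjTranspose_sub, Matrix.conjTranspose_smul, hσ.1, hρ.1]
          congr 2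
          simp
        have hdual : ∀ ω ∈ cone 𝓜, 0 ≤ tr2 ((lam : ℂ) • σ - ρ) ω := by
          intro ω hc
          rw [tr2_sub_smul_left]
          set X := tr2 ρ ω with hX
          set Y := tr2 σ ω with hY
          have hX0 : 0 ≤ X := tr2_nonneg hρ (cone_posSemidef hc)
          have hY0 : 0 ≤ Y := tr2_nonneg hσ (cone_posSemidef hc)
          have key2 : ∀ t : ℝ, 0 < t → t < 1 →
              (1 - t) * X + t ≤ lam * ((1 - t) * Y + t) := by
            intro t ht0 ht1
            have hmemc : (1 - t) • ω + t • (1 : Matrix (Fin d) (Fin d) ℂ) ∈ cone 𝓜 :=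
              hconv hc h1cone (by linarith) ht0.le (by ring)
            have hpd : ((1 - t) • ω + t • (1 : Matrix (Fin d) (Fin d) ℂ)).PosDef := by
              rw [real_smul_matrix_eq, real_smul_matrix_eq]
              exact Matrix.PosDef.posSemidef_add
                (psd_ofReal_smul (cone_posSemidef hc) (by linarith))
                (posDef_ofReal_smul Matrix.PosDef.one ht0)
            have e1 : tr2 ρ ((1 - t) • ω + t • (1 : Matrix (Fin d) (Fin d) ℂ))
                = (1 - t) * X + t := by
              rw [real_smul_matrix_eq, real_smul_matrix_eq, tr2_add_right,
                tr2_ofReal_smul_right, tr2_ofReal_smul_right, tr2_one, hρre, mul_one, hX]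
            have e2 : tr2 σ ((1 - t) • ω + t • (1 : Matrix (Fin d) (Fin d) ℂ))
                = (1 - t) * Y + t := by
              rw [real_smul_matrix_eq, real_smul_matrix_eq, tr2_add_right,
                tr2_ofReal_smul_right, tr2_ofReal_smul_right, tr2_one, hσre, mul_one, hY]
            have h := hmem _ hpd hmemc
            rw [e1, e2] at h
            have hlt : Real.log (((1 - t) * X + t) / ((1 - t) * Y + t)) < c := by
              exact_mod_cast lt_of_le_of_lt h hsc
            have hXp : 0 < (1 - t) * X + t := by nlinarith
            have hYp : 0 < (1 - t) * Y + t := by nlinarith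
            have hlt2 := (Real.log_lt_iff_lt_exp (div_pos hXp hYp)).mp hlt
            rw [div_lt_iff₀ hYp] at hlt2
            exact hlt2.le
          have hlim : Filter.Tendsto
              (fun t : ℝ => lam * ((1 - t) * Y + t) - ((1 - t) * X + t))
              (nhdsWithin 0 (Set.Ioi 0)) (nhds (lam * Y - X)) := by
            have hca : ContinuousAt
                (fun t : ℝ => lam * ((1 - t) * Y + t) - ((1 - t) * X + t)) 0 := by fun_prop
            have h0 := hca.tendsto
            simp only [sub_zero, one_mul, add_zero] at h0
            exact h0.mono_left nhdsWithin_le_nhds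
          have h0 : 0 ≤ lam * Y - X := by
            refine ge_of_tendsto hlim ?_
            refine Filter.eventually_of_mem
              (Ioo_mem_nhdsGT_of_mem (by norm_num : (0 : ℝ) ∈ Set.Ico 0 1)) ?_
            intro t ht
            have := key2 t ht.1 ht.2
            linarith
          linarith
        have hfeas : lam ∈ {l : ℝ | 0 < l ∧ ((l : ℂ) • σ - ρ).IsHermitian ∧
            ∀ ω ∈ cone 𝓜, 0 ≤ tr2 ((l : ℂ) • σ - ρ) ω} := ⟨Real.exp_pos c, hherm, hdual⟩
        refine le_trans (iInf₂_le lam hfeas) ?_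
        rw [hlam, Real.log_exp]

end MRD
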